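/- Let n ≥ 4, let p : Fin n → ℝ² be the circle placement p(i) = (cos(2πi/n), sin(2πi/n)), and let G be any simple graph on the vertex set Fin n. Then the number of unordered pairs {e, f} of distinct edges e = {a,c}, f = {b,d} of G such that the open segment between p(a) and p(c) intersects the open segment between p(b) and p(d) is at most (n choose 4). (This is the upper-bound direction of Lemma 1: the maximum number of crossings in a drawing obtained by the circle embedding scheme is (n choose 4), attained by the complete graph K_n.) -/

import Mathlib

/-- The circle placement: vertex `i` of `Fin n` is placed at the point
`(cos (2πi/n), sin (2πi/n))` of the unit circle in `ℝ²`. -/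
noncomputable def circlePlacement (n : ℕ) : Fin n → ℝ × ℝ :=
  fun i => (Real.cos (2 * Real.pi * (i : ℕ) / n), Real.sin (2 * Real.pi * (i : ℕ) / n))

/-!
For points in general position (no three collinear), two distinct chords that cross have four
distinct endpoints, so sending a crossing pair of edges to its set of endpoints lands in the
4-subsets of the vertices. This map is injective because of the three ways to split four points
into two segments at most one crosses: if `xz` crosses `yw`, then `y, w` lie on opposite sides
of the line `xz` and `x, z` on opposite sides of `yw`, and if `xy` crossed `zw` as well, the
resulting signs of the four orientations would contradict `[xyz] - [xyw] + [xzw] - [yzw] = 0`.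
Three distinct points of the unit circle are never collinear (`abc = 4RK`), and the circle
placement is injective since its points are the powers of a primitive `n`-th root of unity.
-/

/-- Twice the signed area of the triangle `xyz`. -/
def orient (x y z : ℝ × ℝ) : ℝ := (y.1 - x.1) * (z.2 - x.2) - (y.2 - x.2) * (z.1 - x.1)

lemma orient_swap (x y z : ℝ × ℝ) : orient x z y = -orient x y z := by unfold orient; ring

lemma orient_rotate (x y z : ℝ × ℝ) : orient y z x = orient x y z := by unfold orient; ring

lemma orient_self_right (x y : ℝ × ℝ) : orient x y y = 0 := by unfold orient; ring

lemma orient_sub_orient_add_orient_sub_orient (x y z w : ℝ × ℝ) :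
    orient x y z - orient x y w + orient x z w - orient y z w = 0 := by unfold orient; ring

lemma orient_smul_add_smul (x y z w : ℝ × ℝ) {s t : ℝ} (h : s + t = 1) :
    orient x y (s • z + t • w) = s * orient x y z + t * orient x y w := by
  obtain rfl : s = 1 - t := by linarith
  simp only [orient, Prod.fst_add, Prod.snd_add, Prod.smul_fst, Prod.smul_snd, smul_eq_mul]
  ring

lemma orient_eq_zero_of_mem_openSegment {x y q : ℝ × ℝ} (hq : q ∈ openSegment ℝ x y) :
    orient x y q = 0 := by
  obtain ⟨s, t, -, -, hst, rfl⟩ := hq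
  rw [orient_smul_add_smul x y x y hst]
  unfold orient
  ring

lemma orient_mul_orient_neg_of_inter_nonempty {x y z w : ℝ × ℝ}
    (h : (openSegment ℝ x y ∩ openSegment ℝ z w).Nonempty) (hz : orient x y z ≠ 0) :
    orient x y z * orient x y w < 0 := by
  obtain ⟨q, hxy, s, t, hs, ht, hst, rfl⟩ := h
  have hsum : s * orient x y z + t * orient x y w = 0 := by
    rw [← orient_smul_add_smul x y z w hst, orient_eq_zero_of_mem_openSegment hxy]
  have : t * (orient x y z * orient x y w) = -(s * orient x y z ^ 2) := by
    linear_combination orient x y z * hsum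
  exact neg_of_mul_neg_right (this ▸ neg_neg_of_pos (by positivity)) ht.le

lemma not_inter_nonempty_of_inter_nonempty {x y z w : ℝ × ℝ}
    (hxyz : orient x y z ≠ 0) (hyzw : orient y z w ≠ 0)
    (h : (openSegment ℝ x z ∩ openSegment ℝ y w).Nonempty) :
    ¬ (openSegment ℝ x y ∩ openSegment ℝ z w).Nonempty := by
  intro h'
  have h₁ := orient_mul_orient_neg_of_inter_nonempty h (by rwa [orient_swap, neg_ne_zero])
  have h₂ := orient_mul_orient_neg_of_inter_nonempty (x := y) (y := w) (z := z) (w := x)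
    (by rwa [Set.inter_comm, openSegment_symm ℝ x] at h) (by rwa [orient_swap, neg_ne_zero])
  have h₃ := orient_mul_orient_neg_of_inter_nonempty h' hxyz
  have h₄ := orient_mul_orient_neg_of_inter_nonempty (x := z) (y := w) (z := y) (w := x)
    (by rwa [Set.inter_comm, openSegment_symm ℝ x] at h') (by rwa [orient_rotate])
  have := orient_sub_orient_add_orient_sub_orient x y z w
  rcases mul_neg_iff.1 h₁ with ⟨_, _⟩ | ⟨_, _⟩ <;> rcases mul_neg_iff.1 h₂ with ⟨_, _⟩ | ⟨_, _⟩ <;>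
    rcases mul_neg_iff.1 h₃ with ⟨_, _⟩ | ⟨_, _⟩ <;> rcases mul_neg_iff.1 h₄ with ⟨_, _⟩ | ⟨_, _⟩ <;>
    linarith [orient_swap x y z, orient_rotate x y w, orient_swap y z w, orient_rotate x z w,
      orient_rotate y z w]

/-- The formula `abc = 4RK` for a triangle with sides `a, b, c` and area `K` inscribed in a circle
of radius `R = 1`, written for the vertex `x` and the edge vectors `d`, `v` from it. -/
lemma four_mul_cross_sq_eq_of_unit_circle {x₁ x₂ d₁ d₂ v₁ v₂ : ℝ} (hx : x₁ ^ 2 + x₂ ^ 2 = 1)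
    (hd : 2 * (x₁ * d₁ + x₂ * d₂) + (d₁ ^ 2 + d₂ ^ 2) = 0)
    (hv : 2 * (x₁ * v₁ + x₂ * v₂) + (v₁ ^ 2 + v₂ ^ 2) = 0) :
    4 * (d₁ * v₂ - d₂ * v₁) ^ 2 =
      (d₁ ^ 2 + d₂ ^ 2) * (v₁ ^ 2 + v₂ ^ 2) * ((v₁ - d₁) ^ 2 + (v₂ - d₂) ^ 2) := by
  -- Lagrange's identity `|x|²(d × v)² = |v|²⟨x,d⟩² - 2⟨d,v⟩⟨x,d⟩⟨x,v⟩ + |d|²⟨x,v⟩²`, in which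
  -- `hd` and `hv` say `⟨x,d⟩ = -|d|²/2` and `⟨x,v⟩ = -|v|²/2`.
  linear_combination (-4 * ((d₁ ^ 2 + d₂ ^ 2) * (v₁ ^ 2 + v₂ ^ 2) - (d₁ * v₁ + d₂ * v₂) ^ 2)) * hx
    - ((d₁ ^ 2 + d₂ ^ 2) * (v₁ ^ 2 + v₂ ^ 2) - 2 * (v₁ ^ 2 + v₂ ^ 2) * (x₁ * d₁ + x₂ * d₂)
      + 4 * (d₁ * v₁ + d₂ * v₂) * (x₁ * v₁ + x₂ * v₂)) * hd
    - ((d₁ ^ 2 + d₂ ^ 2) * (v₁ ^ 2 + v₂ ^ 2) - 2 * (d₁ ^ 2 + d₂ ^ 2) * (d₁ * v₁ + d₂ * v₂)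
      - 2 * (d₁ ^ 2 + d₂ ^ 2) * (x₁ * v₁ + x₂ * v₂)) * hv

lemma eq_of_sub_sq_add_sub_sq_eq_zero {x y : ℝ × ℝ} (h : (y.1 - x.1) ^ 2 + (y.2 - x.2) ^ 2 = 0) :
    x = y := by
  obtain ⟨h₁, h₂⟩ := mul_self_add_mul_self_eq_zero.1 (by simpa only [sq] using h)
  exact Prod.ext (by linarith) (by linarith)

lemma orient_ne_zero_of_unit_circle {x y z : ℝ × ℝ} (hx : x.1 ^ 2 + x.2 ^ 2 = 1)
    (hy : y.1 ^ 2 + y.2 ^ 2 = 1) (hz : z.1 ^ 2 + z.2 ^ 2 = 1)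
    (hxy : x ≠ y) (hxz : x ≠ z) (hyz : y ≠ z) : orient x y z ≠ 0 := by
  intro h
  have := four_mul_cross_sq_eq_of_unit_circle hx (d₁ := y.1 - x.1) (d₂ := y.2 - x.2)
    (v₁ := z.1 - x.1) (v₂ := z.2 - x.2) (by linear_combination hy - hx)
    (by linear_combination hz - hx)
  rw [← orient, h, zero_pow two_ne_zero, mul_zero, eq_comm, mul_eq_zero, mul_eq_zero] at this
  rcases this with (h' | h') | h'
  · exact hxy (eq_of_sub_sq_add_sub_sq_eq_zero h')
  · exact hxz (eq_of_sub_sq_add_sub_sq_eq_zero h')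
  · exact hyz (eq_of_sub_sq_add_sub_sq_eq_zero (by linear_combination h'))

section GeneralPosition

variable {ι : Type*} {p : ι → ℝ × ℝ}

variable (p) in
def InGeneralPosition : Prop :=
  ∀ ⦃i j k⦄, i ≠ j → i ≠ k → j ≠ k → orient (p i) (p j) (p k) ≠ 0

lemma InGeneralPosition.eq_of_inter_nonempty (hp : InGeneralPosition p) {u v w : ι}
    (huv : u ≠ v) (huw : u ≠ w)
    (h : (openSegment ℝ (p u) (p v) ∩ openSegment ℝ (p u) (p w)).Nonempty) : v = w := by
  by_contra hvw
  have := orient_mul_orient_neg_of_inter_nonempty (x := p v) (y := p u) (z := p w) (w := p u)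
    (by rwa [openSegment_symm ℝ (p v), openSegment_symm ℝ (p w)]) (hp huv.symm hvw huw)
  rw [orient_self_right, mul_zero] at this
  exact this.false

lemma InGeneralPosition.nodup_of_inter_nonempty (hp : InGeneralPosition p) {a c b d : ι}
    (hac : a ≠ c) (hbd : b ≠ d) (hne : s(a, c) ≠ s(b, d))
    (h : (openSegment ℝ (p a) (p c) ∩ openSegment ℝ (p b) (p d)).Nonempty) :
    [a, c, b, d].Nodup := by
  have hab : a ≠ b := by
    rintro rfl
    exact hne (by rw [hp.eq_of_inter_nonempty hac hbd h])
  have had : a ≠ d := by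
    rintro rfl
    rw [openSegment_symm ℝ (p b)] at h
    exact hne (by rw [hp.eq_of_inter_nonempty hac hbd.symm h, Sym2.eq_swap])
  have hcb : c ≠ b := by
    rintro rfl
    rw [openSegment_symm ℝ (p a)] at h
    exact hne (by rw [hp.eq_of_inter_nonempty hac.symm hbd h, Sym2.eq_swap])
  have hcd : c ≠ d := by
    rintro rfl
    rw [openSegment_symm ℝ (p a), openSegment_symm ℝ (p b)] at h
    exact hne (by rw [hp.eq_of_inter_nonempty hac.symm hbd.symm h])
  simp [*]

variable [DecidableEq ι]

variable (p) in
def IsCrossingPair (S : Finset (Sym2 ι)) : Prop :=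
  ∃ a c b d : ι, S = {s(a, c), s(b, d)} ∧
    (openSegment ℝ (p a) (p c) ∩ openSegment ℝ (p b) (p d)).Nonempty

lemma InGeneralPosition.exists_nodup_of_isCrossingPair (hp : InGeneralPosition p)
    {S : Finset (Sym2 ι)} (hS : ∀ e ∈ S, ¬ e.IsDiag) (hcard : S.card = 2)
    (h : IsCrossingPair p S) :
    ∃ a c b d : ι, S = {s(a, c), s(b, d)} ∧ [a, c, b, d].Nodup ∧
      (openSegment ℝ (p a) (p c) ∩ openSegment ℝ (p b) (p d)).Nonempty := by
  obtain ⟨a, c, b, d, rfl, h⟩ := h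
  have hne : s(a, c) ≠ s(b, d) := by
    rintro heq
    simp [heq] at hcard
  refine ⟨a, c, b, d, rfl, hp.nodup_of_inter_nonempty ?_ ?_ hne h, h⟩
  · simpa using hS s(a, c) (by simp)
  · simpa using hS s(b, d) (by simp)

lemma InGeneralPosition.mem_of_inter_nonempty (hp : InGeneralPosition p) {a c b d u v x y : ι}
    (hn : [a, c, b, d].Nodup)
    (h : (openSegment ℝ (p a) (p c) ∩ openSegment ℝ (p b) (p d)).Nonempty)
    (hn' : [u, v, x, y].Nodup) (hu : u ∈ ({a, c, b, d} : Finset ι))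
    (hv : v ∈ ({a, c, b, d} : Finset ι)) (hx : x ∈ ({a, c, b, d} : Finset ι))
    (hy : y ∈ ({a, c, b, d} : Finset ι))
    (h' : (openSegment ℝ (p u) (p v) ∩ openSegment ℝ (p x) (p y)).Nonempty) :
    s(u, v) ∈ ({s(a, c), s(b, d)} : Finset (Sym2 ι)) := by
  obtain ⟨⟨hac, hab, had⟩, ⟨hcb, hcd⟩, hbd⟩ :
      (a ≠ c ∧ a ≠ b ∧ a ≠ d) ∧ (c ≠ b ∧ c ≠ d) ∧ b ≠ d := by
    simpa using hn
  have hN₁ : ¬ (openSegment ℝ (p a) (p b) ∩ openSegment ℝ (p c) (p d)).Nonempty :=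
    not_inter_nonempty_of_inter_nonempty (hp hab hac hcb.symm) (hp hcb.symm hbd hcd) h
  have hN₂ : ¬ (openSegment ℝ (p a) (p d) ∩ openSegment ℝ (p c) (p b)).Nonempty :=
    not_inter_nonempty_of_inter_nonempty (hp had hac hcd.symm) (hp hcd.symm hbd.symm hcb)
      (by rwa [openSegment_symm ℝ (p d)])
  -- `u, v, x, y` is a permutation of `a, c, b, d`; `hN₁` and `hN₂` exclude the two splittings
  -- other than `{ac, bd}`, up to orientation of the segments.
  simp only [Finset.mem_insert, Finset.mem_singleton] at hu hv hx hy ⊢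
  rcases hu with rfl | rfl | rfl | rfl <;> rcases hv with rfl | rfl | rfl | rfl <;>
    rcases hx with rfl | rfl | rfl | rfl <;> rcases hy with rfl | rfl | rfl | rfl <;>
    simp_all [openSegment_symm, Set.inter_comm]

lemma biUnion_toFinset_pair (a c b d : ι) :
    ({s(a, c), s(b, d)} : Finset (Sym2 ι)).biUnion Sym2.toFinset = {a, c, b, d} := by
  rw [Finset.biUnion_insert, Finset.singleton_biUnion, Sym2.toFinset_mk_eq, Sym2.toFinset_mk_eq,
    Finset.insert_union, Finset.singleton_union]

lemma InGeneralPosition.pair_eq_of_inter_nonempty (hp : InGeneralPosition p)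
    {a c b d a' c' b' d' : ι} (hn : [a, c, b, d].Nodup) (hn' : [a', c', b', d'].Nodup)
    (h : (openSegment ℝ (p a) (p c) ∩ openSegment ℝ (p b) (p d)).Nonempty)
    (h' : (openSegment ℝ (p a') (p c') ∩ openSegment ℝ (p b') (p d')).Nonempty)
    (hV : ({a', c', b', d'} : Finset ι) = {a, c, b, d}) :
    ({s(a', c'), s(b', d')} : Finset (Sym2 ι)) = {s(a, c), s(b, d)} := by
  have hmem : ∀ z ∈ ({a', c', b', d'} : Finset ι), z ∈ ({a, c, b, d} : Finset ι) :=
    fun z hz => hV ▸ hz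
  have hne' : s(a', c') ≠ s(b', d') := fun heq => by
    have : a' ∈ s(b', d') := heq ▸ Sym2.mem_mk_left a' c'
    simp_all
  refine Finset.eq_of_subset_of_card_le (Finset.insert_subset_iff.2 ⟨?_, ?_⟩) ?_
  · exact hp.mem_of_inter_nonempty hn h hn' (hmem a' (by simp)) (hmem c' (by simp))
      (hmem b' (by simp)) (hmem d' (by simp)) h'
  · refine Finset.singleton_subset_iff.2 (hp.mem_of_inter_nonempty hn h ?_ (hmem b' (by simp))
      (hmem d' (by simp)) (hmem a' (by simp)) (hmem c' (by simp)) (by rwa [Set.inter_comm]))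
    simp only [List.nodup_cons, List.mem_cons] at hn' ⊢
    tauto
  · exact (Finset.card_pair hne').symm ▸ Finset.card_le_two

theorem InGeneralPosition.card_filter_isCrossingPair_le [Fintype ι] (hp : InGeneralPosition p)
    (G : SimpleGraph ι) [Fintype G.edgeSet] [DecidablePred (IsCrossingPair p)] :
    ((G.edgeFinset.powersetCard 2).filter (IsCrossingPair p)).card ≤
      (Fintype.card ι).choose 4 := by
  have key : ∀ S ∈ (G.edgeFinset.powersetCard 2).filter (IsCrossingPair p),
      ∃ a c b d : ι, S = {s(a, c), s(b, d)} ∧ [a, c, b, d].Nodup ∧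
        (openSegment ℝ (p a) (p c) ∩ openSegment ℝ (p b) (p d)).Nonempty := by
    intro S hS
    obtain ⟨hS, hcr⟩ := Finset.mem_filter.1 hS
    obtain ⟨hsub, hcard⟩ := Finset.mem_powersetCard.1 hS
    exact hp.exists_nodup_of_isCrossingPair
      (fun e he => G.not_isDiag_of_mem_edgeSet (SimpleGraph.mem_edgeFinset.1 (hsub he))) hcard hcr
  rw [← Finset.card_univ, ← Finset.card_powersetCard]
  refine Finset.card_le_card_of_injOn (fun S => S.biUnion Sym2.toFinset) (fun S hS => ?_)
    (fun S hS S' hS' hSS' => ?_)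
  · obtain ⟨a, c, b, d, rfl, hn, -⟩ := key S hS
    simp only [Finset.mem_coe, Finset.mem_powersetCard, biUnion_toFinset_pair]
    exact ⟨Finset.subset_univ _, by simpa using List.toFinset_card_of_nodup hn⟩
  · obtain ⟨a, c, b, d, rfl, hn, h⟩ := key S hS
    obtain ⟨a', c', b', d', rfl, hn', h'⟩ := key S' hS'
    simp only [biUnion_toFinset_pair] at hSS'
    exact hp.pair_eq_of_inter_nonempty hn' hn h' h hSS'

end GeneralPosition

open Complex in
lemma circlePlacement_eq_re_im_pow (n : ℕ) (i : Fin n) :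
    circlePlacement n i =
      ((exp (2 * Real.pi * I / n) ^ (i : ℕ)).re, (exp (2 * Real.pi * I / n) ^ (i : ℕ)).im) := by
  have : exp (2 * Real.pi * I / n) ^ (i : ℕ) = exp ((2 * Real.pi * (i : ℕ) / n : ℝ) * I) := by
    rw [← exp_nat_mul]
    push_cast
    ring_nf
  rw [this, exp_ofReal_mul_I_re, exp_ofReal_mul_I_im]
  rfl

lemma circlePlacement_injective (n : ℕ) : Function.Injective (circlePlacement n) := by
  intro i j h
  rw [circlePlacement_eq_re_im_pow, circlePlacement_eq_re_im_pow, Prod.mk.injEq] at h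
  exact Fin.ext <| (Complex.isPrimitiveRoot_exp n i.pos.ne').pow_inj i.isLt j.isLt
    (Complex.ext h.1 h.2)

lemma circlePlacement_fst_sq_add_snd_sq (n : ℕ) (i : Fin n) :
    (circlePlacement n i).1 ^ 2 + (circlePlacement n i).2 ^ 2 = 1 :=
  Real.cos_sq_add_sin_sq _

lemma inGeneralPosition_circlePlacement (n : ℕ) : InGeneralPosition (circlePlacement n) :=
  fun i j k hij hik hjk => orient_ne_zero_of_unit_circle
    (circlePlacement_fst_sq_add_snd_sq n i) (circlePlacement_fst_sq_add_snd_sq n j)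
    (circlePlacement_fst_sq_add_snd_sq n k) ((circlePlacement_injective n).ne hij)
    ((circlePlacement_injective n).ne hik) ((circlePlacement_injective n).ne hjk)

open scoped Classical in
theorem circleDrawing_crossings_le_general (n : ℕ) (G : SimpleGraph (Fin n)) :
    ((G.edgeFinset.powersetCard 2).filter
      (fun S => ∃ a c b d : Fin n,
        S = {s(a, c), s(b, d)} ∧
        (openSegment ℝ (circlePlacement n a) (circlePlacement n c) ∩
          openSegment ℝ (circlePlacement n b) (circlePlacement n d)).Nonempty)).card
      ≤ n.choose 4 := by
  convert (inGeneralPosition_circlePlacement n).card_filter_isCrossingPair_le G using 2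
  · exact Finset.filter_congr fun _ _ => Iff.rfl
  · exact (Fintype.card_fin n).symm

open scoped Classical in
/-- Upper bound for the circle embedding scheme: for any simple graph `G` on `Fin n`,
the number of unordered pairs `{e, f}` of distinct edges `e = {a, c}`, `f = {b, d}`
of `G` whose open segments `p a p c` and `p b p d` intersect is at most `n.choose 4`. -/
theorem circleDrawing_crossings_le (n : ℕ) (hn : 4 ≤ n) (G : SimpleGraph (Fin n)) :
    ((G.edgeFinset.powersetCard 2).filter
      (fun S => ∃ a c b d : Fin n,
        S = {s(a, c), s(b, d)} ∧
        (openSegment ℝ (circlePlacement n a) (circlePlacement n c) ∩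
          openSegment ℝ (circlePlacement n b) (circlePlacement n d)).Nonempty)).card
      ≤ n.choose 4 :=
  circleDrawing_crossings_le_general n G
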